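/- Let (X, Ξ) be a measurable space, 𝔄 a countable algebra of subsets of a set S₃, and for each x ∈ X let νˣ₁, νˣ₂ be finitely additive probability measures on subalgebras 𝔄₁, 𝔄₂ ⊆ 𝔄 such that x ↦ νˣ_j(A) is measurable for all A ∈ 𝔄_j (j=1,2) and νˣ₁(A₁) + νˣ₂(A₂) ≤ 1 whenever A₁ ∈ 𝔄₁, A₂ ∈ 𝔄₂ are disjoint. Then there exist finitely additive probability measures νˣ₃ on 𝔄 extending both νˣ₁ and νˣ₂ such that x ↦ νˣ₃(A) is measurable for every A ∈ 𝔄. -/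

import Mathlib

/-!
Strassen's lemma turns the compatibility condition into positivity: if `f₁` and `f₂` are simple
functions over `𝔄₁` and `𝔄₂` with `f₁ + f₂ ≤ 0`, then the level sets `{f₁ > t}` and `{f₂ > -t}`
are disjoint, so the layer-cake formula bounds `∫ f₁ dν₁ + ∫ f₂ dν₂` by `0`. Hence the values of
`ν₁` on `𝔄₁` and of `ν₂` on `𝔄₂` define a positive `ℚ`-linear functional on the span of their
indicators. Running through an enumeration of `𝔄`, M. Riesz's extension step assigns to each new
indicator the smallest admissible value: the supremum of the values of the rational combinations
lying below it. That supremum is taken over a countable set, so it is measurable in the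
parameter, and positivity of the limit functional makes it a finitely additive probability.
-/

open Set Finsupp MeasureTheory

/-- An algebra (Boolean algebra) of subsets of `S`. -/
def IsSetAlg {S : Type*} (𝔄 : Set (Set S)) : Prop :=
  ∅ ∈ 𝔄 ∧ (∀ A ∈ 𝔄, Aᶜ ∈ 𝔄) ∧ (∀ A ∈ 𝔄, ∀ B ∈ 𝔄, A ∪ B ∈ 𝔄)

/-- A finitely additive probability measure on an algebra `𝔄`. -/
def IsFinAddProb {S : Type*} (𝔄 : Set (Set S)) (ν : Set S → ℝ) : Prop :=
  ν ∅ = 0 ∧ ν Set.univ = 1 ∧ (∀ A ∈ 𝔄, 0 ≤ ν A ∧ ν A ≤ 1) ∧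
    ∀ A ∈ 𝔄, ∀ B ∈ 𝔄, Disjoint A B → ν (A ∪ B) = ν A + ν B

section LinearCombination

variable {ι R N : Type*} [Semiring R] [AddCommMonoid N] [Module R N]

theorem linearCombination_congr {a b : ι → N} {w : ι →₀ R} (h : ∀ i ∈ w.support, a i = b i) :
    linearCombination R a w = linearCombination R b w := by
  simp only [linearCombination_apply]
  exact Finsupp.sum_congr fun i hi => by rw [h i hi]

theorem linearCombination_eq_erase_add (b : ι → N) (u : ι →₀ R) (j : ι) :
    linearCombination R b u = linearCombination R b (u.erase j) + u j • b j := by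
  conv_lhs => rw [← erase_add_single j u]
  rw [map_add, linearCombination_single]

end LinearCombination

section RieszExtension

variable {ι M : Type*} [AddCommGroup M] [PartialOrder M] [Module ℚ M]

/-- The assignment `g i ↦ a i`, `i ∈ D`, extends to a positive (in particular well-defined)
`ℚ`-linear functional on the span of `g '' D`. -/
def IsPositiveOn (g : ι → M) (a : ι → ℝ) (D : Set ι) : Prop :=
  ∀ w ∈ supported ℚ ℚ D, 0 ≤ linearCombination ℚ g w → 0 ≤ linearCombination ℚ a w

def IsBoundedBySpan (g : ι → M) (D : Set ι) (x : M) : Prop :=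
  (∃ w ∈ supported ℚ ℚ D, linearCombination ℚ g w ≤ x) ∧
    ∃ v ∈ supported ℚ ℚ D, x ≤ linearCombination ℚ g v

theorem IsBoundedBySpan.mono {g : ι → M} {D D' : Set ι} {x : M} (h : IsBoundedBySpan g D x)
    (hD : D ⊆ D') : IsBoundedBySpan g D' x :=
  ⟨h.1.imp fun _ hw => ⟨supported_mono hD hw.1, hw.2⟩,
    h.2.imp fun _ hv => ⟨supported_mono hD hv.1, hv.2⟩⟩

noncomputable def rieszValue (g : ι → M) (a : ι → ℝ) (D : Set ι) (j : ι) : ℝ :=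
  ⨆ w : {w : ι →₀ ℚ // w ∈ supported ℚ ℚ D ∧ linearCombination ℚ g w ≤ g j},
    linearCombination ℚ a w.1

namespace IsPositiveOn

variable {g : ι → M} {a : ι → ℝ} {D : Set ι}

theorem apply_nonneg (h : IsPositiveOn g a D) {i : ι} (hi : i ∈ D) (hg : 0 ≤ g i) : 0 ≤ a i := by
  simpa using h _ (single_mem_supported ℚ 1 hi) (by simpa using hg)

variable [IsOrderedAddMonoid M]

theorem linearCombination_mono (h : IsPositiveOn g a D) {w v : ι →₀ ℚ}
    (hw : w ∈ supported ℚ ℚ D) (hv : v ∈ supported ℚ ℚ D)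
    (hle : linearCombination ℚ g w ≤ linearCombination ℚ g v) :
    linearCombination ℚ a w ≤ linearCombination ℚ a v := by
  have := h (v - w) (sub_mem hv hw) (by rwa [map_sub, sub_nonneg])
  rwa [map_sub, sub_nonneg] at this

theorem apply_le_apply (h : IsPositiveOn g a D) {i j : ι} (hi : i ∈ D) (hj : j ∈ D)
    (hle : g i ≤ g j) : a i ≤ a j := by
  simpa using h.linearCombination_mono (single_mem_supported ℚ 1 hi)
    (single_mem_supported ℚ 1 hj) (by simpa using hle)

theorem apply_eq_add (h : IsPositiveOn g a D) {i j k : ι} (hi : i ∈ D) (hj : j ∈ D)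
    (hk : k ∈ D) (hg : g i = g j + g k) : a i = a j + a k := by
  have hi' := single_mem_supported ℚ (1 : ℚ) hi
  have hjk := add_mem (single_mem_supported ℚ (1 : ℚ) hj) (single_mem_supported ℚ (1 : ℚ) hk)
  exact le_antisymm (by simpa using h.linearCombination_mono hi' hjk (by simp [hg]))
    (by simpa using h.linearCombination_mono hjk hi' (by simp [hg]))

theorem le_rieszValue (h : IsPositiveOn g a D) {j : ι}
    (hup : ∃ v ∈ supported ℚ ℚ D, g j ≤ linearCombination ℚ g v) {w : ι →₀ ℚ}
    (hw : w ∈ supported ℚ ℚ D) (hwj : linearCombination ℚ g w ≤ g j) :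
    linearCombination ℚ a w ≤ rieszValue g a D j := by
  obtain ⟨v, hv, hjv⟩ := hup
  refine le_ciSup (f := fun u : {u : ι →₀ ℚ // u ∈ supported ℚ ℚ D ∧
    linearCombination ℚ g u ≤ g j} => linearCombination ℚ a u.1) ⟨linearCombination ℚ a v, ?_⟩
    ⟨w, hw, hwj⟩
  rintro _ ⟨⟨u, hu, hug⟩, rfl⟩
  exact h.linearCombination_mono hu hv (hug.trans hjv)

theorem rieszValue_le (h : IsPositiveOn g a D) {j : ι}
    (hlow : ∃ w ∈ supported ℚ ℚ D, linearCombination ℚ g w ≤ g j) {v : ι →₀ ℚ}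
    (hv : v ∈ supported ℚ ℚ D) (hjv : g j ≤ linearCombination ℚ g v) :
    rieszValue g a D j ≤ linearCombination ℚ a v := by
  obtain ⟨w, hw, hwj⟩ := hlow
  have : Nonempty {w : ι →₀ ℚ // w ∈ supported ℚ ℚ D ∧ linearCombination ℚ g w ≤ g j} :=
    ⟨⟨w, hw, hwj⟩⟩
  exact ciSup_le fun u => h.linearCombination_mono u.2.1 hv (u.2.2.trans hjv)

theorem rieszValue_eq_of_mem (h : IsPositiveOn g a D) {j : ι} (hj : j ∈ D) :
    rieszValue g a D j = a j := by
  have hsingle := single_mem_supported ℚ (1 : ℚ) hj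
  exact le_antisymm (by simpa using h.rieszValue_le ⟨_, hsingle, by simp⟩ hsingle (by simp))
    (by simpa using h.le_rieszValue ⟨_, hsingle, by simp⟩ hsingle (by simp))

variable [PosSMulMono ℚ M]

/-- Dividing `0 ≤ u + q • g j` by `|q|` puts `-q⁻¹ • u` below `g j` if `q > 0` and above it if
`q < 0`; `rieszValue` lies between the values of all such combinations. -/
theorem add_smul_rieszValue_nonneg (h : IsPositiveOn g a D) {j : ι}
    (hj : IsBoundedBySpan g D (g j)) {u : ι →₀ ℚ} (hu : u ∈ supported ℚ ℚ D) {q : ℚ}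
    (hq : 0 ≤ linearCombination ℚ g u + q • g j) :
    0 ≤ linearCombination ℚ a u + q • rieszValue g a D j := by
  rw [Rat.smul_def]
  rcases lt_trichotomy q 0 with hq0 | rfl | hq0
  · have hinv : q * q⁻¹ = 1 := mul_inv_cancel₀ hq0.ne
    have key := h.rieszValue_le hj.1 (Submodule.smul_mem _ (-q)⁻¹ hu) (by
      rw [map_smul, ← sub_nonneg]
      convert smul_nonneg (inv_nonneg.2 (neg_nonneg.2 hq0.le)) hq using 1
      linear_combination (norm := module) hinv • g j)
    rw [map_smul, Rat.smul_def, Rat.cast_inv, Rat.cast_neg,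
      le_inv_mul_iff₀ (by exact_mod_cast neg_pos.2 hq0)] at key
    linarith
  · simpa using h u hu (by simpa using hq)
  · have hinv : q * q⁻¹ = 1 := mul_inv_cancel₀ hq0.ne'
    have key := h.le_rieszValue hj.2 (Submodule.smul_mem _ (-q⁻¹) hu) (by
      rw [map_smul, ← sub_nonneg]
      convert smul_nonneg (inv_nonneg.2 hq0.le) hq using 1
      linear_combination (norm := module) -hinv • g j)
    rw [map_smul, Rat.smul_def, Rat.cast_neg, Rat.cast_inv, neg_mul, neg_le, inv_mul_eq_div,
      le_div_iff₀ (by exact_mod_cast hq0)] at key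
    linarith

theorem update_rieszValue [DecidableEq ι] (h : IsPositiveOn g a D) {j : ι}
    (hj : IsBoundedBySpan g D (g j)) :
    IsPositiveOn g (Function.update a j (rieszValue g a D j)) (insert j D) := by
  by_cases hjD : j ∈ D
  · rwa [h.rieszValue_eq_of_mem hjD, Function.update_eq_self, insert_eq_of_mem hjD]
  intro u hu hgu
  have hu' : u.erase j ∈ supported ℚ ℚ D := by
    rw [mem_supported, support_erase, Finset.coe_erase]
    exact sdiff_singleton_subset_iff.2 ((mem_supported ℚ u).1 hu)
  rw [linearCombination_eq_erase_add _ _ j, Function.update_self,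
    linearCombination_congr (b := a) fun i hi =>
      Function.update_of_ne (ne_of_mem_of_not_mem (hu' hi) hjD) _ _]
  exact h.add_smul_rieszValue_nonneg hj hu' (linearCombination_eq_erase_add g u j ▸ hgu)

end IsPositiveOn

section Iteration

variable (g : ι → M) (D₀ : Set ι) (e : ℕ → ι)

def rieszStage : ℕ → Set ι
  | 0 => D₀
  | n + 1 => insert (e n) (rieszStage n)

open Classical in
noncomputable def rieszSeq (a₀ : ι → ℝ) : ℕ → ι → ℝ
  | 0 => a₀
  | n + 1 => Function.update (rieszSeq a₀ n) (e n)
      (rieszValue g (rieszSeq a₀ n) (rieszStage D₀ e n) (e n))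

/-- The value at `i` once `i` has entered the stages. Off `D₀ ∪ range e` the index
`Function.invFun e i` is junk, but every `i ∈ D₀` lies in all stages. -/
noncomputable def rieszLimit (a₀ : ι → ℝ) (i : ι) : ℝ :=
  rieszSeq g D₀ e a₀ (Function.invFun e i + 1) i

variable {g D₀ e}

theorem rieszStage_mono : Monotone (rieszStage D₀ e) :=
  monotone_nat_of_le_succ fun _ => subset_insert _ _

theorem subset_rieszStage (n : ℕ) : D₀ ⊆ rieszStage D₀ e n :=
  rieszStage_mono (Nat.zero_le n)

theorem rieszStage_subset (n : ℕ) : rieszStage D₀ e n ⊆ D₀ ∪ range e := by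
  induction n with
  | zero => exact subset_union_left
  | succ n ih => exact insert_subset (Or.inr (mem_range_self n)) ih

theorem countable_rieszStage (hD₀ : D₀.Countable) (n : ℕ) : (rieszStage D₀ e n).Countable := by
  induction n with
  | zero => exact hD₀
  | succ n ih => exact ih.insert _

theorem mem_rieszStage_invFun {i : ι} (hi : i ∈ D₀ ∪ range e) :
    i ∈ rieszStage D₀ e (Function.invFun e i + 1) := by
  rcases hi with hi | hi
  · exact subset_rieszStage _ hi
  · exact .inl (Function.invFun_eq hi).symm

theorem exists_support_subset_rieszStage {w : ι →₀ ℚ}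
    (hw : w ∈ supported ℚ ℚ (D₀ ∪ range e)) : ∃ n, ↑w.support ⊆ rieszStage D₀ e n :=
  rieszStage_mono.directed_le.exists_mem_subset_of_finset_subset_biUnion fun _ hi =>
    mem_iUnion.2 ⟨_, mem_rieszStage_invFun (hw hi)⟩

variable [IsOrderedAddMonoid M] [PosSMulMono ℚ M] {a₀ : ι → ℝ}

theorem isPositiveOn_rieszSeq (h₀ : IsPositiveOn g a₀ D₀)
    (hbdd : ∀ n, IsBoundedBySpan g D₀ (g (e n))) (n : ℕ) :
    IsPositiveOn g (rieszSeq g D₀ e a₀ n) (rieszStage D₀ e n) := by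
  classical
  induction n with
  | zero => exact h₀
  | succ n ih => exact ih.update_rieszValue ((hbdd n).mono (subset_rieszStage n))

theorem rieszSeq_eq_of_le (h₀ : IsPositiveOn g a₀ D₀)
    (hbdd : ∀ n, IsBoundedBySpan g D₀ (g (e n))) {n m : ℕ} (hnm : n ≤ m) {i : ι}
    (hi : i ∈ rieszStage D₀ e n) : rieszSeq g D₀ e a₀ m i = rieszSeq g D₀ e a₀ n i := by
  classical
  induction m, hnm using Nat.le_induction with
  | base => rfl
  | succ m hnm ih =>
    rw [rieszSeq, Function.update_apply]
    split_ifs with hie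
    · rw [hie, (isPositiveOn_rieszSeq h₀ hbdd m).rieszValue_eq_of_mem
        (hie ▸ rieszStage_mono hnm hi), ← hie, ih]
    · exact ih

theorem rieszLimit_eq (h₀ : IsPositiveOn g a₀ D₀) (hbdd : ∀ n, IsBoundedBySpan g D₀ (g (e n)))
    {n : ℕ} {i : ι} (hi : i ∈ rieszStage D₀ e n) :
    rieszLimit g D₀ e a₀ i = rieszSeq g D₀ e a₀ n i :=
  (rieszSeq_eq_of_le h₀ hbdd (le_max_left _ n)
    (mem_rieszStage_invFun (rieszStage_subset n hi))).symm.trans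
    (rieszSeq_eq_of_le h₀ hbdd (le_max_right _ n) hi)

theorem isPositiveOn_rieszLimit (h₀ : IsPositiveOn g a₀ D₀)
    (hbdd : ∀ n, IsBoundedBySpan g D₀ (g (e n))) :
    IsPositiveOn g (rieszLimit g D₀ e a₀) (D₀ ∪ range e) := by
  intro w hw hgw
  obtain ⟨n, hn⟩ := exists_support_subset_rieszStage hw
  rw [linearCombination_congr fun i hi => rieszLimit_eq h₀ hbdd (hn hi)]
  exact isPositiveOn_rieszSeq h₀ hbdd n w ((mem_supported ℚ w).2 hn) hgw

end Iteration

section Measurability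

variable {X : Type*} [MeasurableSpace X] {g : ι → M}

theorem measurable_linearCombination {D : Set ι} {a : X → ι → ℝ}
    (ha : ∀ i ∈ D, Measurable fun x => a x i) {w : ι →₀ ℚ} (hw : w ∈ supported ℚ ℚ D) :
    Measurable fun x => linearCombination ℚ (a x) w := by
  simp only [linearCombination_apply, Finsupp.sum, Rat.smul_def]
  exact Finset.measurable_sum _ fun i hi => (ha i (hw hi)).const_mul _

theorem measurable_rieszValue {D : Set ι} {a : X → ι → ℝ} (hD : D.Countable)
    (ha : ∀ i ∈ D, Measurable fun x => a x i) (j : ι) :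
    Measurable fun x => rieszValue g (a x) D j := by
  have := hD.to_subtype
  have : Countable {w : ι →₀ ℚ // w ∈ supported ℚ ℚ D ∧ linearCombination ℚ g w ≤ g j} :=
    Function.Injective.countable (f := fun w => supportedEquivFinsupp (M := ℚ) (R := ℚ) D
      ⟨w.1, w.2.1⟩) fun _ _ hwv =>
        Subtype.ext (Subtype.mk.inj ((supportedEquivFinsupp D).injective hwv))
  exact Measurable.iSup fun w => measurable_linearCombination ha w.2.1

variable {D₀ : Set ι} {e : ℕ → ι} {a₀ : X → ι → ℝ}

theorem measurable_rieszSeq (hD₀ : D₀.Countable) (ha₀ : ∀ i ∈ D₀, Measurable fun x => a₀ x i)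
    (n : ℕ) : ∀ i ∈ rieszStage D₀ e n, Measurable fun x => rieszSeq g D₀ e (a₀ x) n i := by
  classical
  induction n with
  | zero => exact ha₀
  | succ n ih =>
    intro i hi
    simp only [rieszSeq, Function.update_apply]
    split_ifs with hie
    · exact measurable_rieszValue (countable_rieszStage hD₀ n) ih _
    · exact ih i (hi.resolve_left hie)

theorem measurable_rieszLimit (hD₀ : D₀.Countable) (ha₀ : ∀ i ∈ D₀, Measurable fun x => a₀ x i)
    {i : ι} (hi : i ∈ D₀ ∪ range e) : Measurable fun x => rieszLimit g D₀ e (a₀ x) i :=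
  measurable_rieszSeq hD₀ ha₀ _ i (mem_rieszStage_invFun hi)

end Measurability

end RieszExtension

theorem integral_ite_lt {a b v c : ℝ} (hav : a ≤ v) (hvb : v ≤ b) :
    ∫ t in a..b, (if t < v then c else 0) = c * (v - a) := by
  have : (fun t : ℝ => if t < v then c else 0) = (Iio v).indicator fun _ => c := by
    ext t; simp [Set.indicator_apply]
  rw [this, intervalIntegral.integral_of_le (hav.trans hvb), setIntegral_indicator measurableSet_Iio]
  have : Ioc a b ∩ Iio v = Ioo a v := by
    ext t
    simp only [mem_inter_iff, mem_Ioc, mem_Iio, mem_Ioo]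
    exact ⟨fun h => ⟨h.1.1, h.2⟩, fun h => ⟨⟨h.1, h.2.le.trans hvb⟩, h.2⟩⟩
  rw [this, setIntegral_const, Real.volume_real_Ioo_of_le hav, smul_eq_mul, mul_comm]

theorem intervalIntegrable_ite_lt (v c a b : ℝ) :
    IntervalIntegrable (fun t : ℝ => if t < v then c else 0) volume a b := by
  have : (fun t : ℝ => if t < v then c else 0) = (Iio v).indicator fun _ => c := by
    ext t; simp [Set.indicator_apply]
  rw [this, intervalIntegrable_iff]
  exact (integrableOn_const measure_Ioc_lt_top.ne).indicator measurableSet_Iio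

section FinitelyAdditive

variable {S : Type*} {𝔅 : Set (Set S)} {ν : Set S → ℝ}

namespace IsSetAlg

variable (h𝔅 : IsSetAlg 𝔅)
include h𝔅

theorem compl_mem {A : Set S} (hA : A ∈ 𝔅) : Aᶜ ∈ 𝔅 := h𝔅.2.1 A hA

theorem union_mem {A B : Set S} (hA : A ∈ 𝔅) (hB : B ∈ 𝔅) : A ∪ B ∈ 𝔅 := h𝔅.2.2 A hA B hB

theorem univ_mem : univ ∈ 𝔅 := by simpa using h𝔅.compl_mem h𝔅.1

theorem inter_mem {A B : Set S} (hA : A ∈ 𝔅) (hB : B ∈ 𝔅) : A ∩ B ∈ 𝔅 := by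
  simpa [compl_union] using h𝔅.compl_mem (h𝔅.union_mem (h𝔅.compl_mem hA) (h𝔅.compl_mem hB))

theorem diff_mem {A B : Set S} (hA : A ∈ 𝔅) (hB : B ∈ 𝔅) : A \ B ∈ 𝔅 :=
  h𝔅.inter_mem hA (h𝔅.compl_mem hB)

theorem biUnion_mem {ι : Type*} (F : Finset ι) {E : ι → Set S} (hE : ∀ i ∈ F, E i ∈ 𝔅) :
    (⋃ i ∈ F, E i) ∈ 𝔅 := by
  classical
  induction F using Finset.induction_on with
  | empty => simpa using h𝔅.1
  | insert i F _ ih =>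
    simp only [Finset.mem_insert, forall_eq_or_imp] at hE
    rw [Finset.set_biUnion_insert]
    exact h𝔅.union_mem hE.1 (ih hE.2)

theorem biInter_mem {ι : Type*} (F : Finset ι) {E : ι → Set S} (hE : ∀ i ∈ F, E i ∈ 𝔅) :
    (⋂ i ∈ F, E i) ∈ 𝔅 := by
  simpa [compl_iUnion] using h𝔅.compl_mem (h𝔅.biUnion_mem F fun i hi => h𝔅.compl_mem (hE i hi))

end IsSetAlg

namespace IsFinAddProb

variable (hν : IsFinAddProb 𝔅 ν) (h𝔅 : IsSetAlg 𝔅)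
include hν h𝔅

theorem apply_biUnion {ι : Type*} (F : Finset ι) {E : ι → Set S} (hE : ∀ i ∈ F, E i ∈ 𝔅)
    (hd : (F : Set ι).PairwiseDisjoint E) : ν (⋃ i ∈ F, E i) = ∑ i ∈ F, ν (E i) := by
  classical
  induction F using Finset.induction_on with
  | empty => simpa using hν.1
  | insert i F hi ih =>
    simp only [Finset.mem_insert, forall_eq_or_imp] at hE
    rw [Finset.coe_insert, pairwiseDisjoint_insert] at hd
    rw [Finset.set_biUnion_insert, Finset.sum_insert hi, ← ih hE.2 hd.1]
    refine hν.2.2.2 _ hE.1 _ (h𝔅.biUnion_mem F hE.2) (disjoint_iUnion₂_right.2 fun k hk => ?_)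
    exact hd.2 k hk (ne_of_mem_of_not_mem hk hi).symm

theorem mono {A B : Set S} (hA : A ∈ 𝔅) (hB : B ∈ 𝔅) (hAB : A ⊆ B) : ν A ≤ ν B := by
  rw [← union_sdiff_cancel hAB, hν.2.2.2 A hA _ (h𝔅.diff_mem hB hA) disjoint_sdiff_right]
  linarith [(hν.2.2.1 _ (h𝔅.diff_mem hB hA)).1]

theorem apply_compl {A : Set S} (hA : A ∈ 𝔅) : ν Aᶜ = 1 - ν A := by
  have := hν.2.2.2 A hA _ (h𝔅.compl_mem hA) disjoint_compl_right
  rw [union_compl_self, hν.2.1] at this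
  linarith

end IsFinAddProb

theorem IsFinAddProb.eq_of_compatible {𝔄₁ 𝔄₂ : Set (Set S)} {ν₁ ν₂ : Set S → ℝ}
    (h𝔄₁ : IsSetAlg 𝔄₁) (h𝔄₂ : IsSetAlg 𝔄₂) (hν₁ : IsFinAddProb 𝔄₁ ν₁)
    (hν₂ : IsFinAddProb 𝔄₂ ν₂)
    (hcomp : ∀ A₁ ∈ 𝔄₁, ∀ A₂ ∈ 𝔄₂, Disjoint A₁ A₂ → ν₁ A₁ + ν₂ A₂ ≤ 1)
    {A : Set S} (hA₁ : A ∈ 𝔄₁) (hA₂ : A ∈ 𝔄₂) : ν₁ A = ν₂ A := by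
  have h₁ := hcomp A hA₁ _ (h𝔄₂.compl_mem hA₂) disjoint_compl_right
  have h₂ := hcomp _ (h𝔄₁.compl_mem hA₁) A hA₂ disjoint_compl_left
  rw [hν₂.apply_compl h𝔄₂ hA₂] at h₁
  rw [hν₁.apply_compl h𝔄₁ hA₁] at h₂
  linarith

noncomputable def indicatorCombination (w : Set S →₀ ℚ) : S → ℝ :=
  linearCombination ℚ (fun A : Set S => A.indicator 1) w

/-- The fibres of `atomLabel w` are the atoms of the algebra generated by `w.support`. -/
noncomputable def atomLabel (w : Set S →₀ ℚ) (s : S) : Finset (Set S) :=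
  open Classical in w.support.filter (s ∈ ·)

theorem indicatorCombination_apply (w : Set S →₀ ℚ) (s : S) :
    indicatorCombination w s = ∑ A ∈ atomLabel w s, (w A : ℝ) := by
  classical
  simp only [indicatorCombination, atomLabel, linearCombination_apply, Finsupp.sum,
    Finset.sum_apply, Finset.sum_filter]
  exact Finset.sum_congr rfl fun A _ => by simp [Set.indicator_apply, Rat.smul_def]

theorem abs_indicatorCombination_le (w : Set S →₀ ℚ) (s : S) :
    |indicatorCombination w s| ≤ ∑ A ∈ w.support, |(w A : ℝ)| := by
  classical
  rw [indicatorCombination_apply]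
  exact (Finset.abs_sum_le_sum_abs _ _).trans
    (Finset.sum_le_sum_of_subset_of_nonneg (Finset.filter_subset _ _) fun _ _ _ => abs_nonneg _)

theorem atomLabel_mem_powerset (w : Set S →₀ ℚ) (s : S) : atomLabel w s ∈ w.support.powerset := by
  classical
  exact Finset.mem_powerset.2 (Finset.filter_subset _ _)

theorem setOf_atomLabel_eq (w : Set S →₀ ℚ) (P : Finset (Set S) → Prop) [DecidablePred P] :
    {s | P (atomLabel w s)} = ⋃ T ∈ w.support.powerset.filter P, atomLabel w ⁻¹' {T} := by
  ext s
  simp [Finset.mem_powerset.1 (atomLabel_mem_powerset w s)]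

theorem preimage_atomLabel_mem (h𝔅 : IsSetAlg 𝔅) {w : Set S →₀ ℚ} (hw : ↑w.support ⊆ 𝔅)
    {T : Finset (Set S)} (hT : T ∈ w.support.powerset) : atomLabel w ⁻¹' {T} ∈ 𝔅 := by
  classical
  have : atomLabel w ⁻¹' {T} = ⋂ A ∈ w.support, if A ∈ T then A else Aᶜ := by
    ext s
    simp only [mem_preimage, mem_singleton_iff, mem_iInter]
    constructor
    · rintro rfl A hA
      split_ifs with h <;> simp_all [atomLabel]
    · intro h
      ext A
      simp only [atomLabel, Finset.mem_filter]
      have := h A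
      by_cases hA : A ∈ w.support
      · by_cases hAT : A ∈ T <;> simp_all
      · exact iff_of_false (fun h => hA h.1) fun hAT => hA (Finset.mem_powerset.1 hT hAT)
  rw [this]
  exact h𝔅.biInter_mem _ fun A hA => by
    split_ifs
    exacts [hw hA, h𝔅.compl_mem (hw hA)]

theorem setOf_atomLabel_mem (h𝔅 : IsSetAlg 𝔅) {w : Set S →₀ ℚ} (hw : ↑w.support ⊆ 𝔅)
    (P : Finset (Set S) → Prop) : {s | P (atomLabel w s)} ∈ 𝔅 := by
  classical
  rw [setOf_atomLabel_eq]
  exact h𝔅.biUnion_mem _ fun T hT => preimage_atomLabel_mem h𝔅 hw (Finset.mem_of_mem_filter T hT)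

theorem IsFinAddProb.apply_setOf_atomLabel (hν : IsFinAddProb 𝔅 ν) (h𝔅 : IsSetAlg 𝔅)
    {w : Set S →₀ ℚ} (hw : ↑w.support ⊆ 𝔅) (P : Finset (Set S) → Prop) [DecidablePred P] :
    ν {s | P (atomLabel w s)} =
      ∑ T ∈ w.support.powerset, if P T then ν (atomLabel w ⁻¹' {T}) else 0 := by
  rw [setOf_atomLabel_eq, hν.apply_biUnion h𝔅 _
    (fun T hT => preimage_atomLabel_mem h𝔅 hw (Finset.mem_of_mem_filter T hT))
    ((pairwiseDisjoint_fiber _ _).subset (subset_univ _)), Finset.sum_filter]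

theorem IsFinAddProb.linearCombination_eq_sum_atoms (hν : IsFinAddProb 𝔅 ν)
    (h𝔅 : IsSetAlg 𝔅) {w : Set S →₀ ℚ} (hw : ↑w.support ⊆ 𝔅) :
    linearCombination ℚ ν w = ∑ T ∈ w.support.powerset,
      (∑ A ∈ T, (w A : ℝ)) * ν (atomLabel w ⁻¹' {T}) := by
  classical
  have hsets : ∀ A ∈ w.support, ν A = ∑ T ∈ w.support.powerset,
      if A ∈ T then ν (atomLabel w ⁻¹' {T}) else 0 := fun A hA => by
    rw [← hν.apply_setOf_atomLabel h𝔅 hw (A ∈ ·)]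
    congr
    ext s
    simp [atomLabel, hA]
  rw [linearCombination_apply, Finsupp.sum]
  calc ∑ A ∈ w.support, w A • ν A
      = ∑ A ∈ w.support, ∑ T ∈ w.support.powerset,
          if A ∈ T then (w A : ℝ) * ν (atomLabel w ⁻¹' {T}) else 0 :=
        Finset.sum_congr rfl fun A hA => by
          simp only [hsets A hA, Rat.smul_def, Finset.mul_sum, mul_ite, mul_zero]
    _ = _ := by
      rw [Finset.sum_comm]
      refine Finset.sum_congr rfl fun T hT => ?_
      rw [Finset.sum_ite_mem, Finset.inter_eq_right.2 (Finset.mem_powerset.1 hT), Finset.sum_mul]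

theorem IsFinAddProb.sum_apply_atoms (hν : IsFinAddProb 𝔅 ν) (h𝔅 : IsSetAlg 𝔅) {w : Set S →₀ ℚ}
    (hw : ↑w.support ⊆ 𝔅) : ∑ T ∈ w.support.powerset, ν (atomLabel w ⁻¹' {T}) = 1 := by
  simpa [hν.2.1] using (hν.apply_setOf_atomLabel h𝔅 hw fun _ => True).symm

theorem setOf_lt_indicatorCombination_mem (h𝔅 : IsSetAlg 𝔅) {w : Set S →₀ ℚ}
    (hw : ↑w.support ⊆ 𝔅) (t : ℝ) : {s | t < indicatorCombination w s} ∈ 𝔅 := by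
  simp_rw [indicatorCombination_apply]
  exact setOf_atomLabel_mem h𝔅 hw fun T => t < ∑ A ∈ T, (w A : ℝ)

theorem IsFinAddProb.antitone_apply_setOf_lt (hν : IsFinAddProb 𝔅 ν) (h𝔅 : IsSetAlg 𝔅)
    {w : Set S →₀ ℚ} (hw : ↑w.support ⊆ 𝔅) :
    Antitone fun t => ν {s | t < indicatorCombination w s} := fun _ _ htt' =>
  hν.mono h𝔅 (setOf_lt_indicatorCombination_mem h𝔅 hw _)
    (setOf_lt_indicatorCombination_mem h𝔅 hw _) fun _ hs => lt_of_le_of_lt htt' hs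

theorem IsFinAddProb.linearCombination_eq_add_integral (hν : IsFinAddProb 𝔅 ν)
    (h𝔅 : IsSetAlg 𝔅) {w : Set S →₀ ℚ} (hw : ↑w.support ⊆ 𝔅) {a b : ℝ}
    (ha : ∀ s, a ≤ indicatorCombination w s) (hb : ∀ s, indicatorCombination w s ≤ b) :
    linearCombination ℚ ν w = a + ∫ t in a..b, ν {s | t < indicatorCombination w s} := by
  classical
  set ρ := fun T => ν (atomLabel w ⁻¹' {T})
  set val := fun T : Finset (Set S) => ∑ A ∈ T, (w A : ℝ)
  have hlevel : ∀ t, ν {s | t < indicatorCombination w s} =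
      ∑ T ∈ w.support.powerset, if t < val T then ρ T else 0 := fun t => by
    simp_rw [indicatorCombination_apply]
    exact hν.apply_setOf_atomLabel h𝔅 hw fun T => t < val T
  have hatom : ∀ T ∈ w.support.powerset,
      ∫ t in a..b, (if t < val T then ρ T else 0) = ρ T * (val T - a) := by
    intro T _
    rcases (atomLabel w ⁻¹' {T}).eq_empty_or_nonempty with he | ⟨s, hs⟩
    · simp [ρ, he, hν.1]
    · have hs : indicatorCombination w s = val T := by rw [indicatorCombination_apply, hs]
      exact integral_ite_lt (hs ▸ ha s) (hs ▸ hb s)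
  simp_rw [hlevel]
  rw [intervalIntegral.integral_finsetSum fun T _ => intervalIntegrable_ite_lt _ _ _ _,
    Finset.sum_congr rfl hatom, hν.linearCombination_eq_sum_atoms h𝔅 hw]
  show ∑ T ∈ _, val T * ρ T = a + ∑ T ∈ _, ρ T * (val T - a)
  have hρ : ∑ T ∈ w.support.powerset, ρ T = 1 := hν.sum_apply_atoms h𝔅 hw
  rw [Finset.sum_congr rfl fun T _ => mul_sub (ρ T) (val T) a, Finset.sum_sub_distrib,
    ← Finset.sum_mul, hρ, one_mul, add_sub_cancel]
  exact Finset.sum_congr rfl fun T _ => mul_comm _ _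

theorem linearCombination_add_linearCombination_nonpos {𝔄₁ 𝔄₂ : Set (Set S)}
    {ν₁ ν₂ : Set S → ℝ} (h𝔄₁ : IsSetAlg 𝔄₁) (h𝔄₂ : IsSetAlg 𝔄₂) (hν₁ : IsFinAddProb 𝔄₁ ν₁)
    (hν₂ : IsFinAddProb 𝔄₂ ν₂)
    (hcomp : ∀ A₁ ∈ 𝔄₁, ∀ A₂ ∈ 𝔄₂, Disjoint A₁ A₂ → ν₁ A₁ + ν₂ A₂ ≤ 1)
    {w₁ w₂ : Set S →₀ ℚ} (hw₁ : ↑w₁.support ⊆ 𝔄₁) (hw₂ : ↑w₂.support ⊆ 𝔄₂)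
    (h : ∀ s, indicatorCombination w₁ s + indicatorCombination w₂ s ≤ 0) :
    linearCombination ℚ ν₁ w₁ + linearCombination ℚ ν₂ w₂ ≤ 0 := by
  set f₁ := indicatorCombination w₁
  set f₂ := indicatorCombination w₂
  set C₁ := ∑ A ∈ w₁.support, |(w₁ A : ℝ)|
  set C₂ := ∑ A ∈ w₂.support, |(w₂ A : ℝ)|
  have hC₁ : 0 ≤ C₁ := Finset.sum_nonneg fun _ _ => abs_nonneg _
  have hC₂ : 0 ≤ C₂ := Finset.sum_nonneg fun _ _ => abs_nonneg _
  have hf₁ : ∀ s, |f₁ s| ≤ C₁ + C₂ := fun s =>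
    (abs_indicatorCombination_le w₁ s).trans (le_add_of_nonneg_right hC₂)
  have hf₂ : ∀ s, |f₂ s| ≤ C₁ + C₂ := fun s =>
    (abs_indicatorCombination_le w₂ s).trans (le_add_of_nonneg_left hC₁)
  set C := C₁ + C₂
  have hlevel : ∀ t, ν₁ {s | t < f₁ s} + ν₂ {s | -t < f₂ s} ≤ 1 := fun t =>
    hcomp _ (setOf_lt_indicatorCombination_mem h𝔄₁ hw₁ t) _
      (setOf_lt_indicatorCombination_mem h𝔄₂ hw₂ (-t)) <| disjoint_left.2 fun s hs₁ hs₂ => by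
        linarith [h s, show t < f₁ s from hs₁, show -t < f₂ s from hs₂]
  have hreflect : ∫ t in -C..C, ν₂ {s | t < f₂ s} = ∫ t in -C..C, ν₂ {s | -t < f₂ s} := by
    rw [intervalIntegral.integral_comp_neg fun t => ν₂ {s | t < f₂ s}, neg_neg]
  have hint₁ : IntervalIntegrable (fun t => ν₁ {s | t < f₁ s}) volume (-C) C :=
    (hν₁.antitone_apply_setOf_lt h𝔄₁ hw₁).intervalIntegrable
  have hint₂ : IntervalIntegrable (fun t => ν₂ {s | -t < f₂ s}) volume (-C) C :=
    ((hν₂.antitone_apply_setOf_lt h𝔄₂ hw₂).comp fun _ _ h => neg_le_neg h).intervalIntegrable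
  have hmono := intervalIntegral.integral_mono_on (by linarith) (hint₁.add hint₂)
    intervalIntegrable_const fun t _ => hlevel t
  rw [intervalIntegral.integral_add hint₁ hint₂, intervalIntegral.integral_const,
    smul_eq_mul, mul_one] at hmono
  rw [hν₁.linearCombination_eq_add_integral h𝔄₁ hw₁ (fun s => (abs_le.1 (hf₁ s)).1)
      (fun s => (abs_le.1 (hf₁ s)).2),
    hν₂.linearCombination_eq_add_integral h𝔄₂ hw₂ (fun s => (abs_le.1 (hf₂ s)).1)
      (fun s => (abs_le.1 (hf₂ s)).2), hreflect]
  linarith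

end FinitelyAdditive

section Extension

variable {S : Type*} {𝔄 𝔄₁ 𝔄₂ : Set (Set S)}

theorem isPositiveOn_piecewise [DecidablePred (· ∈ 𝔄₁)] {ν₁ ν₂ : Set S → ℝ}
    (h𝔄₁ : IsSetAlg 𝔄₁) (h𝔄₂ : IsSetAlg 𝔄₂) (hν₁ : IsFinAddProb 𝔄₁ ν₁)
    (hν₂ : IsFinAddProb 𝔄₂ ν₂)
    (hcomp : ∀ A₁ ∈ 𝔄₁, ∀ A₂ ∈ 𝔄₂, Disjoint A₁ A₂ → ν₁ A₁ + ν₂ A₂ ≤ 1) :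
    IsPositiveOn (fun A : Set S => A.indicator (1 : S → ℝ)) (𝔄₁.piecewise ν₁ ν₂) (𝔄₁ ∪ 𝔄₂) := by
  intro w hw hgw
  have hw₁ : ↑(-w.filter (· ∈ 𝔄₁)).support ⊆ 𝔄₁ := fun A hA => by
    simp only [support_neg, support_filter, Finset.coe_filter] at hA
    exact hA.2
  have hw₂ : ↑(-w.filter (· ∉ 𝔄₁)).support ⊆ 𝔄₂ := fun A hA => by
    simp only [support_neg, support_filter, Finset.coe_filter] at hA
    exact (hw hA.1).resolve_left hA.2
  have hsum : indicatorCombination (-w.filter (· ∈ 𝔄₁)) +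
      indicatorCombination (-w.filter (· ∉ 𝔄₁)) =
        -linearCombination ℚ (fun A : Set S => A.indicator 1) w := by
    simp only [indicatorCombination, map_neg, ← neg_add, ← map_add, filter_add_filter_not]
  have key := linearCombination_add_linearCombination_nonpos h𝔄₁ h𝔄₂ hν₁ hν₂ hcomp hw₁ hw₂
    fun s => by
      have hs := congrFun hsum s
      simp only [Pi.add_apply, Pi.neg_apply] at hs
      linarith [show (0 : ℝ) ≤ linearCombination ℚ (fun A : Set S => A.indicator 1) w s from
        hgw s]
  rw [← filter_add_filter_not w (· ∈ 𝔄₁), map_add,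
    linearCombination_congr (a := 𝔄₁.piecewise ν₁ ν₂) (b := ν₁) fun A hA =>
      piecewise_eq_of_mem _ _ _ ?_,
    linearCombination_congr (a := 𝔄₁.piecewise ν₁ ν₂) (b := ν₂) fun A hA =>
      piecewise_eq_of_notMem _ _ _ ?_]
  · simp only [map_neg] at key
    linarith
  all_goals simp_all [support_filter]

theorem IsFinAddProb.piecewise_eq_of_mem_right [DecidablePred (· ∈ 𝔄₁)] {ν₁ ν₂ : Set S → ℝ}
    (h𝔄₁ : IsSetAlg 𝔄₁) (h𝔄₂ : IsSetAlg 𝔄₂) (hν₁ : IsFinAddProb 𝔄₁ ν₁)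
    (hν₂ : IsFinAddProb 𝔄₂ ν₂)
    (hcomp : ∀ A₁ ∈ 𝔄₁, ∀ A₂ ∈ 𝔄₂, Disjoint A₁ A₂ → ν₁ A₁ + ν₂ A₂ ≤ 1) {A : Set S}
    (hA : A ∈ 𝔄₂) : 𝔄₁.piecewise ν₁ ν₂ A = ν₂ A := by
  by_cases hA₁ : A ∈ 𝔄₁
  · rw [piecewise_eq_of_mem _ _ _ hA₁, hν₁.eq_of_compatible h𝔄₁ h𝔄₂ hν₂ hcomp hA₁ hA]
  · exact piecewise_eq_of_notMem _ _ _ hA₁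

theorem isBoundedBySpan_indicator {D : Set (Set S)} (hD : univ ∈ D) (A : Set S) :
    IsBoundedBySpan (fun A : Set S => A.indicator (1 : S → ℝ)) D (A.indicator 1) :=
  ⟨⟨0, zero_mem _, by
      rw [map_zero]; exact fun s => indicator_nonneg (f := (1 : S → ℝ)) (fun _ _ => zero_le_one) s⟩,
    ⟨single univ 1, single_mem_supported ℚ 1 hD, by
      rw [linearCombination_single, one_smul, indicator_univ]
      exact fun s => indicator_le_self' (f := (1 : S → ℝ)) (fun _ _ => zero_le_one) s⟩⟩

theorem isFinAddProb_of_isPositiveOn (h𝔄 : IsSetAlg 𝔄) {ν : Set S → ℝ}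
    (hpos : IsPositiveOn (fun A : Set S => A.indicator (1 : S → ℝ)) ν 𝔄) (h0 : ν ∅ = 0)
    (h1 : ν univ = 1) : IsFinAddProb 𝔄 ν := by
  refine ⟨h0, h1, fun A hA => ⟨hpos.apply_nonneg hA (indicator_nonneg fun _ _ => zero_le_one),
    h1 ▸ hpos.apply_le_apply hA h𝔄.univ_mem
      (indicator_le_indicator_of_subset (subset_univ A) fun _ => zero_le_one)⟩,
    fun A hA B hB hAB => hpos.apply_eq_add (h𝔄.union_mem hA hB) hA hB ?_⟩
  exact indicator_union_of_disjoint hAB _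

end Extension

/-- Measurable-in-parameter common extension of finitely additive probability
measures: two compatible families on subalgebras of a countable algebra `𝔄`,
measurable in the parameter `x`, have a common finitely additive extension to `𝔄`
which is still measurable in `x`. -/
theorem measurable_common_finitely_additive_extension
    {X S₃ : Type*} [MeasurableSpace X]
    (𝔄 𝔄₁ 𝔄₂ : Set (Set S₃)) (hcount : 𝔄.Countable)
    (halg : IsSetAlg 𝔄) (halg₁ : IsSetAlg 𝔄₁) (halg₂ : IsSetAlg 𝔄₂)
    (hsub₁ : 𝔄₁ ⊆ 𝔄) (hsub₂ : 𝔄₂ ⊆ 𝔄)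
    (ν₁ : X → Set S₃ → ℝ) (ν₂ : X → Set S₃ → ℝ)
    (hν₁ : ∀ x, IsFinAddProb 𝔄₁ (ν₁ x)) (hν₂ : ∀ x, IsFinAddProb 𝔄₂ (ν₂ x))
    (hmeas₁ : ∀ A ∈ 𝔄₁, Measurable fun x => ν₁ x A)
    (hmeas₂ : ∀ A ∈ 𝔄₂, Measurable fun x => ν₂ x A)
    (hcomp : ∀ x, ∀ A₁ ∈ 𝔄₁, ∀ A₂ ∈ 𝔄₂, Disjoint A₁ A₂ →
      ν₁ x A₁ + ν₂ x A₂ ≤ 1) :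
    ∃ ν₃ : X → Set S₃ → ℝ,
      (∀ x, IsFinAddProb 𝔄 (ν₃ x)) ∧
      (∀ x, ∀ A ∈ 𝔄₁, ν₃ x A = ν₁ x A) ∧
      (∀ x, ∀ A ∈ 𝔄₂, ν₃ x A = ν₂ x A) ∧
      (∀ A ∈ 𝔄, Measurable fun x => ν₃ x A) := by
  classical
  obtain ⟨e, rfl⟩ := hcount.exists_eq_range ⟨∅, halg.1⟩
  set g : Set S₃ → S₃ → ℝ := fun A => A.indicator 1
  set a₀ : X → Set S₃ → ℝ := fun x => 𝔄₁.piecewise (ν₁ x) (ν₂ x)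
  have ha₀₁ (x : X) {A : Set S₃} (hA : A ∈ 𝔄₁) : a₀ x A = ν₁ x A := piecewise_eq_of_mem _ _ _ hA
  have ha₀₂ (x : X) {A : Set S₃} (hA : A ∈ 𝔄₂) : a₀ x A = ν₂ x A :=
    (hν₁ x).piecewise_eq_of_mem_right halg₁ halg₂ (hν₂ x) (hcomp x) hA
  have hpos₀ (x : X) : IsPositiveOn g (a₀ x) (𝔄₁ ∪ 𝔄₂) :=
    isPositiveOn_piecewise halg₁ halg₂ (hν₁ x) (hν₂ x) (hcomp x)
  have hbdd (n : ℕ) : IsBoundedBySpan g (𝔄₁ ∪ 𝔄₂) (g (e n)) :=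
    isBoundedBySpan_indicator (.inl halg₁.univ_mem) (e n)
  set ν₃ : X → Set S₃ → ℝ := fun x => rieszLimit g (𝔄₁ ∪ 𝔄₂) e (a₀ x)
  have hν₃ (x : X) {A : Set S₃} (hA : A ∈ 𝔄₁ ∪ 𝔄₂) : ν₃ x A = a₀ x A :=
    rieszLimit_eq (hpos₀ x) hbdd (n := 0) hA
  have hbase : 𝔄₁ ∪ 𝔄₂ ⊆ range e := union_subset hsub₁ hsub₂
  refine ⟨ν₃, fun x => isFinAddProb_of_isPositiveOn halg ?_ ?_ ?_, fun x A hA => ?_,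
    fun x A hA => ?_, fun A hA => ?_⟩
  · simpa only [union_eq_right.2 hbase] using isPositiveOn_rieszLimit (hpos₀ x) hbdd
  · rw [hν₃ x (.inl halg₁.1), ha₀₁ x halg₁.1, (hν₁ x).1]
  · rw [hν₃ x (.inl halg₁.univ_mem), ha₀₁ x halg₁.univ_mem, (hν₁ x).2.1]
  · rw [hν₃ x (.inl hA), ha₀₁ x hA]
  · rw [hν₃ x (.inr hA), ha₀₂ x hA]
  · refine measurable_rieszLimit (hcount.mono hbase) ?_ (.inr hA)
    rintro B (hB | hB)
    · simpa only [ha₀₁ _ hB] using hmeas₁ B hB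
    · simpa only [ha₀₂ _ hB] using hmeas₂ B hB
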